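/- arXiv:2005.11878 — 4 statements merged into one kernel-verified Lean document; each statement's English description precedes it below -/
import Mathlib

section
/- Let σ̄_a(s,d) be defined implicitly by σ^s I_a(s,d) = 1 where I_a(s,d) = E[||φ_a(z)||^s], z ~ N(0,I_d), a ∈ [0,1], d fixed. Then s ↦ σ̄_a(s,d) is strictly decreasing in s on (0,∞). -/
open MeasureTheory ProbabilityTheory

/-- `I_a(s,d) = E[‖φ_a(z)‖^s]` for a standard Gaussian vector `z` in `ℝ^d`. -/
noncomputable def Ia (a s : ℝ) (d : ℕ) : ℝ :=
  ∫ z : Fin d → ℝ, (∑ i, (if 0 < z i then z i else a * z i) ^ 2) ^ (s / 2)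
    ∂(Measure.pi fun _ => gaussianReal 0 1)

/-!
`I_a(s,d) = ∫ f ^ s` for `f z = ‖φ_a(z)‖ = preluNorm a z`. For `0 < s < t`, Jensen's inequality
for the strictly convex `y ↦ y ^ (t / s)` gives `(∫ f ^ s) ^ (t / s) < ∫ f ^ t`; it is strict
because `f` is continuous and nonconstant (`f 0 = 0 < f 1`) while the Gaussian measure charges
every open set. Raising both sides to the negative power `-1 / t` gives `σ̄(t) < σ̄(s)`. All
moments are finite since `‖φ_a(z)‖ ≤ (1 + |a|) ‖z‖` and Gaussian measures have moments of all
orders.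
-/

open Real Set

section Lyapunov

variable {α : Type*} [MeasurableSpace α] {μ : Measure α} {f : α → ℝ}

lemma not_ae_eq_const_rpow (hf : 0 ≤ f) (hconst : ∀ c, ¬ f =ᵐ[μ] fun _ => c) {s : ℝ}
    (hs : s ≠ 0) (c : ℝ) : ¬ (fun x => f x ^ s) =ᵐ[μ] fun _ => c := fun h =>
  hconst (c ^ s⁻¹) <| h.mono fun x hx => by
    simp only at hx
    rw [← hx, rpow_rpow_inv (hf x) hs]

lemma integral_rpow_pos (hf : 0 ≤ f) (hconst : ∀ c, ¬ f =ᵐ[μ] fun _ => c) {s : ℝ}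
    (hs : s ≠ 0) (hint : Integrable (fun x => f x ^ s) μ) : 0 < ∫ x, f x ^ s ∂μ := by
  refine (integral_nonneg fun x => rpow_nonneg (hf x) s).lt_of_ne fun h => ?_
  exact not_ae_eq_const_rpow hf hconst hs 0
    ((integral_eq_zero_iff_of_nonneg (fun x => rpow_nonneg (hf x) s) hint).mp h.symm)

lemma integral_rpow_rpow_div_lt_integral_rpow [IsProbabilityMeasure μ] (hf : 0 ≤ f)
    (hconst : ∀ c, ¬ f =ᵐ[μ] fun _ => c) {s t : ℝ} (hs : 0 < s) (hst : s < t)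
    (hs_int : Integrable (fun x => f x ^ s) μ) (ht_int : Integrable (fun x => f x ^ t) μ) :
    (∫ x, f x ^ s ∂μ) ^ (t / s) < ∫ x, f x ^ t ∂μ := by
  have hcomp : (fun y : ℝ => y ^ (t / s)) ∘ (fun x => f x ^ s) = fun x => f x ^ t := by
    funext x
    simp only [Function.comp, ← rpow_mul (hf x), mul_div_cancel₀ t hs.ne']
  have hjensen := (strictConvexOn_rpow ((one_lt_div hs).mpr hst)).ae_eq_const_or_map_average_lt
    (continuousOn_id.rpow_const fun _ _ => Or.inr (div_pos (hs.trans hst) hs).le) isClosed_Ici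
    (ae_of_all _ fun x => rpow_nonneg (hf x) s) hs_int (hcomp ▸ ht_int)
  rcases hjensen with hae | hlt
  · exact absurd hae (not_ae_eq_const_rpow hf hconst hs.ne' _)
  · simpa [average_eq_integral, ← rpow_mul (hf _), mul_div_cancel₀ t hs.ne'] using hlt

lemma strictAntiOn_integral_rpow_rpow_neg_one_div [IsProbabilityMeasure μ] (hf : 0 ≤ f)
    (hconst : ∀ c, ¬ f =ᵐ[μ] fun _ => c)
    (hint : ∀ s : ℝ, 0 < s → Integrable (fun x => f x ^ s) μ) :
    StrictAntiOn (fun s : ℝ => (∫ x, f x ^ s ∂μ) ^ (-1 / s)) (Ioi 0) := by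
  intro s (hs : 0 < s) t (ht : 0 < t) hst
  have hIs := integral_rpow_pos hf hconst (ne_of_gt hs) (hint s hs)
  have hlt := integral_rpow_rpow_div_lt_integral_rpow hf hconst hs hst (hint s hs) (hint t ht)
  calc (∫ x, f x ^ t ∂μ) ^ (-1 / t)
      < ((∫ x, f x ^ s ∂μ) ^ (t / s)) ^ (-1 / t) :=
        rpow_lt_rpow_of_neg (rpow_pos_of_pos hIs _) hlt (div_neg_of_neg_of_pos (by norm_num) ht)
    _ = (∫ x, f x ^ s ∂μ) ^ (-1 / s) := by
        rw [← rpow_mul hIs.le]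
        congr 1
        field_simp

end Lyapunov

lemma isOpenPosMeasure_gaussianReal (m : ℝ) {v : NNReal} (hv : v ≠ 0) :
    (gaussianReal m v).IsOpenPosMeasure :=
  (gaussianReal_absolutelyContinuous' m hv).isOpenPosMeasure

lemma integrable_norm_toLp_rpow_pi_gaussianReal {ι : Type*} [Fintype ι] {s : ℝ}
    (hs : 0 ≤ s) :
    Integrable (fun z : ι → ℝ => ‖WithLp.toLp 2 z‖ ^ s)
      (Measure.pi fun _ => gaussianReal 0 1) := by
  have h := (IsGaussian.memLp_id (stdGaussian (EuclideanSpace ℝ ι)) (ENNReal.ofReal s)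
    ENNReal.ofReal_ne_top).integrable_norm_rpow'
  rw [ENNReal.toReal_ofReal hs, ← map_pi_eq_stdGaussian] at h
  exact (integrable_map_measure (g := fun x : EuclideanSpace ℝ ι => ‖x‖ ^ s)
    (continuous_norm.rpow_const fun _ => Or.inr hs).aestronglyMeasurable (by fun_prop)).mp h

noncomputable def prelu (a x : ℝ) : ℝ := if 0 < x then x else a * x

lemma continuous_prelu (a : ℝ) : Continuous (prelu a) := by
  have h : prelu a = fun x => if x ≤ 0 then a * x else x := by
    funext x
    unfold prelu
    split_ifs <;> first | rfl | (exfalso; linarith)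
  rw [h]
  exact Continuous.if_le (continuous_const.mul continuous_id) continuous_id continuous_id
    continuous_const fun x hx => by simp [hx]

lemma abs_prelu_le (a x : ℝ) : |prelu a x| ≤ (1 + |a|) * |x| := by
  unfold prelu
  split_ifs
  · nlinarith [abs_nonneg a, abs_nonneg x]
  · rw [abs_mul]
    nlinarith [abs_nonneg x]

section PreluNorm

variable {ι : Type*} [Fintype ι]

noncomputable def preluNorm (a : ℝ) (z : ι → ℝ) : ℝ := √(∑ i, prelu a (z i) ^ 2)

lemma preluNorm_nonneg (a : ℝ) (z : ι → ℝ) : 0 ≤ preluNorm a z := sqrt_nonneg _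

lemma continuous_preluNorm (a : ℝ) : Continuous (preluNorm (ι := ι) a) :=
  (continuous_finsetSum _ fun i _ => ((continuous_prelu a).comp (continuous_apply i)).pow 2).sqrt

lemma preluNorm_le (a : ℝ) (z : ι → ℝ) : preluNorm a z ≤ (1 + |a|) * ‖WithLp.toLp 2 z‖ := by
  have hc : 0 ≤ 1 + |a| := by positivity
  rw [EuclideanSpace.norm_eq, ← sqrt_sq hc, ← sqrt_mul (sq_nonneg _), Finset.mul_sum]
  refine sqrt_le_sqrt (Finset.sum_le_sum fun i _ => ?_)
  rw [Real.norm_eq_abs, ← sq_abs (prelu a _), ← mul_pow]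
  exact pow_le_pow_left₀ (abs_nonneg _) (abs_prelu_le a (z i)) 2

lemma integrable_preluNorm_rpow (a : ℝ) {s : ℝ} (hs : 0 ≤ s) :
    Integrable (fun z => preluNorm a z ^ s) (Measure.pi fun _ : ι => gaussianReal 0 1) := by
  refine ((integrable_norm_toLp_rpow_pi_gaussianReal hs).const_mul ((1 + |a|) ^ s)).mono'
    ((continuous_preluNorm a).rpow_const fun _ => Or.inr hs).aestronglyMeasurable
    (ae_of_all _ fun z => ?_)
  rw [norm_of_nonneg (rpow_nonneg (preluNorm_nonneg a z) s),
    ← mul_rpow (by positivity) (norm_nonneg _)]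
  exact rpow_le_rpow (preluNorm_nonneg a z) (preluNorm_le a z) hs

lemma not_ae_eq_const_preluNorm [Nonempty ι] (a c : ℝ) :
    ¬ preluNorm a =ᵐ[Measure.pi fun _ : ι => gaussianReal 0 1] fun _ => c := by
  have := isOpenPosMeasure_gaussianReal 0 one_ne_zero
  intro h
  have h_eq := ((continuous_preluNorm a).ae_eq_iff_eq _ continuous_const).mp h
  have h0 : preluNorm a (0 : ι → ℝ) = 0 := by simp [preluNorm, prelu]
  have h1 : preluNorm a (1 : ι → ℝ) ≠ 0 := by simp [preluNorm, prelu]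
  exact h1 ((congrFun h_eq 1).trans ((congrFun h_eq 0).symm.trans h0))

end PreluNorm

lemma Ia_eq_integral_preluNorm_rpow (a s : ℝ) (d : ℕ) :
    Ia a s d = ∫ z, preluNorm a z ^ s ∂(Measure.pi fun _ : Fin d => gaussianReal 0 1) := by
  refine integral_congr_ae (ae_of_all _ fun z => ?_)
  show _ = preluNorm a z ^ s
  rw [preluNorm, sqrt_eq_rpow, ← rpow_mul (Finset.sum_nonneg fun i _ => sq_nonneg _)]
  simp only [prelu]
  ring_nf

theorem critical_sigma_strictAnti_general (d : ℕ) (hd : 0 < d) (a : ℝ) :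
    StrictAntiOn (fun s : ℝ => Ia a s d ^ (-1 / s)) (Set.Ioi (0 : ℝ)) := by
  have : Nonempty (Fin d) := ⟨⟨0, hd⟩⟩
  simp_rw [Ia_eq_integral_preluNorm_rpow]
  exact strictAntiOn_integral_rpow_rpow_neg_one_div (preluNorm_nonneg a)
    (not_ae_eq_const_preluNorm a) fun s hs => integrable_preluNorm_rpow a hs.le

/-- The critical standard deviation `σ̄_a(s,d)`, defined by
`σ^s I_a(s,d) = 1`, i.e. `σ̄_a(s,d) = I_a(s,d)^{-1/s}`, is strictly decreasing in `s`
on `(0,∞)` for fixed `a ∈ [0,1]` and width `d ≥ 1`. -/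
theorem critical_sigma_strictAnti (d : ℕ) (hd : 0 < d) (a : ℝ) (ha0 : 0 ≤ a)
    (ha1 : a ≤ 1) :
    StrictAntiOn (fun s : ℝ => Ia a s d ^ (-1 / s)) (Set.Ioi (0 : ℝ)) :=
  critical_sigma_strictAnti_general d hd a
end

section
/- Consider x^(k+1) = max(W^(k+1) x^(k), 0) with x^(0) ≠ 0, W^(k) having i.i.d. N(0,σ²) entries, σ > 0 arbitrary, and fixed width d. Then x^(k) → 0 almost surely as k → ∞. -/
open MeasureTheory ProbabilityTheory Filter
open scoped NNReal ENNReal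

/-!
A centred Gaussian weight is negative with probability `1/2`, so with probability
`2^{-d²} > 0` every weight of a given layer is negative. Such a layer maps the nonnegative output
of the previous ReLU layer to `0`, after which the network stays at `0`. The layers are
independent, so by the second Borel–Cantelli lemma almost surely infinitely many (in particular
one beyond the first) have only negative weights.
-/

lemma measure_Iio_zero_eq_half {μ : Measure ℝ} [IsProbabilityMeasure μ] [μ.IsNegInvariant]
    (h0 : μ {0} = 0) : μ (Set.Iio 0) = 1 / 2 := by
  have hsymm : μ (Set.Ioi 0) = μ (Set.Iio 0) := by
    rw [← Measure.measure_neg, Set.neg_Ioi, neg_zero]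
  have hsum : μ (Set.Iio 0) + μ (Set.Ioi 0) = 1 := by
    rw [measure_congr (Ioi_ae_eq_Ici' h0), ← Set.compl_Iio,
      measure_add_measure_compl measurableSet_Iio, measure_univ]
  rw [ENNReal.eq_div_iff two_ne_zero ENNReal.ofNat_ne_top, two_mul]
  rwa [hsymm] at hsum

instance isNegInvariant_gaussianReal_zero (v : ℝ≥0) : (gaussianReal 0 v).IsNegInvariant :=
  ⟨by simpa [Measure.neg] using gaussianReal_map_neg (μ := 0) (v := v)⟩

lemma gaussianReal_Iio_zero {v : ℝ≥0} (hv : v ≠ 0) : gaussianReal 0 v (Set.Iio 0) = 1 / 2 :=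
  measure_Iio_zero_eq_half (gaussianReal_absolutelyContinuous 0 hv (measure_singleton 0))

namespace ProbabilityTheory.iIndepFun

variable {Ω ι β : Type*} [MeasurableSpace Ω] [MeasurableSpace β] {μ : Measure Ω}
  {f : ℕ × ι → Ω → β} {s : ι → Set β}

lemma measure_biInter_iInter_preimage [Fintype ι] (hf : iIndepFun f μ)
    (hs : ∀ i, MeasurableSet (s i)) (t : Finset ℕ) :
    μ (⋂ k ∈ t, ⋂ i, f (k, i) ⁻¹' s i) = ∏ k ∈ t, ∏ i, μ (f (k, i) ⁻¹' s i) := by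
  have h := hf.measure_inter_preimage_eq_mul (t ×ˢ Finset.univ) (sets := fun p => s p.2)
    (fun p _ => hs p.2)
  rw [Finset.prod_product] at h
  rw [← h]
  congr 1
  ext ω
  simp only [Set.mem_iInter, Finset.mem_product, Finset.mem_univ, and_true, Set.mem_preimage]
  exact ⟨fun h p hp => h p.1 hp p.2, fun h k hk i => h (k, i) hk⟩

lemma iIndepSet_iInter_preimage [Fintype ι] (hf : iIndepFun f μ)
    (hf_meas : ∀ p, Measurable (f p)) (hs : ∀ i, MeasurableSet (s i)) :
    iIndepSet (fun k => ⋂ i, f (k, i) ⁻¹' s i) μ := by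
  rw [iIndepSet_iff_meas_biInter fun k => .iInter fun i => hf_meas (k, i) (hs i)]
  intro t
  rw [hf.measure_biInter_iInter_preimage hs t]
  refine Finset.prod_congr rfl fun k _ => ?_
  simpa using (hf.measure_biInter_iInter_preimage hs {k}).symm

lemma ae_frequently_forall_mem [Fintype ι] [IsProbabilityMeasure μ]
    (hf : iIndepFun f μ) (hf_meas : ∀ p, Measurable (f p)) (hs : ∀ i, MeasurableSet (s i))
    {c : ι → ℝ≥0∞} (hc : ∀ i, c i ≠ 0) (hfs : ∀ k i, μ (f (k, i) ⁻¹' s i) = c i) :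
    ∀ᵐ ω ∂μ, ∃ᶠ k in atTop, ∀ i, f (k, i) ω ∈ s i := by
  set E : ℕ → Set Ω := fun k => ⋂ i, f (k, i) ⁻¹' s i
  have hE_meas : ∀ k, MeasurableSet (E k) := fun k => .iInter fun i => hf_meas (k, i) (hs i)
  have hE : ∀ k, μ (E k) = ∏ i, c i := fun k => by
    simpa [hfs] using hf.measure_biInter_iInter_preimage hs {k}
  have hlimsup : μ (limsup E atTop) = 1 :=
    measure_limsup_eq_one hE_meas (hf.iIndepSet_iInter_preimage hf_meas hs)
      (by simpa only [hE] using
        ENNReal.tsum_const_eq_top_of_ne_zero (Finset.prod_ne_zero_iff.2 fun i _ => hc i))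
  have hae : ∀ᵐ ω ∂μ, ω ∈ limsup E atTop := by
    rw [ae_mem_iff_measure_eq (MeasurableSet.measurableSet_limsup hE_meas).nullMeasurableSet,
      hlimsup, measure_univ]
  filter_upwards [hae] with ω hω
  simpa [E, mem_limsup_iff_frequently_mem] using hω

end ProbabilityTheory.iIndepFun

section ReLU

open Matrix

variable {m n : Type*} [Fintype n]

def reluLayer (A : Matrix m n ℝ) (v : n → ℝ) : m → ℝ := fun i => max ((A *ᵥ v) i) 0

lemma reluLayer_nonneg (A : Matrix m n ℝ) (v : n → ℝ) : 0 ≤ reluLayer A v :=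
  fun _ => le_max_right _ _

@[simp]
lemma reluLayer_zero (A : Matrix m n ℝ) : reluLayer A 0 = 0 := by
  ext i
  simp [reluLayer]

lemma reluLayer_eq_zero_of_nonpos {A : Matrix m n ℝ} {v : n → ℝ} (hA : ∀ i j, A i j ≤ 0)
    (hv : 0 ≤ v) : reluLayer A v = 0 := by
  ext i
  exact max_eq_right (Finset.sum_nonpos fun j _ => mul_nonpos_of_nonpos_of_nonneg (hA i j) (hv j))

/-- Every layer after the first receives a nonnegative input, which a layer with nonpositive
weights maps to `0`. -/
lemma eventually_eq_zero_of_frequently_nonpos {x : ℕ → n → ℝ} {A : ℕ → Matrix n n ℝ}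
    (hx : ∀ k, x (k + 1) = reluLayer (A (k + 1)) (x k))
    (hA : ∃ᶠ k in atTop, ∀ i j, A k i j ≤ 0) : ∀ᶠ k in atTop, x k = 0 := by
  obtain ⟨k, hAk, hk⟩ := (hA.and_eventually (eventually_ge_atTop 2)).exists
  obtain ⟨l, rfl⟩ : ∃ l, k = l + 2 := ⟨k - 2, by omega⟩
  have hzero : x (l + 2) = 0 := by
    rw [hx, reluLayer_eq_zero_of_nonpos hAk (by rw [hx]; exact reluLayer_nonneg _ _)]
  filter_upwards [eventually_ge_atTop (l + 2)] with k hk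
  induction k, hk using Nat.le_induction with
  | base => exact hzero
  | succ k _ ih => rw [hx, ih, reluLayer_zero]

end ReLU

theorem relu_network_as_to_zero_general {Ω : Type*} [MeasureSpace Ω]
    [IsProbabilityMeasure (ℙ : Measure Ω)]
    (d : ℕ) (σ : ℝ≥0) (hσ : 0 < σ)
    (W : ℕ → Ω → Matrix (Fin d) (Fin d) ℝ)
    (hmeas : ∀ k i j, Measurable fun ω => W k ω i j)
    (hindep : iIndepFun
      (fun p : ℕ × Fin d × Fin d => fun ω => W p.1 ω p.2.1 p.2.2) ℙ)
    (hgauss : ∀ k i j, Measure.map (fun ω => W k ω i j) ℙ = gaussianReal 0 (σ ^ 2))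
    (x : ℕ → Ω → Fin d → ℝ)
    (hrec : ∀ k ω i, x (k + 1) ω i = max (∑ j, W (k + 1) ω i j * x k ω j) 0) :
    ∀ᵐ ω ∂ℙ, Tendsto (fun k => x k ω) atTop (nhds 0) := by
  have hneg : ∀ k i j, ℙ ((fun ω => W k ω i j) ⁻¹' Set.Iio 0) = 1 / 2 := fun k i j => by
    rw [← Measure.map_apply (hmeas k i j) measurableSet_Iio, hgauss,
      gaussianReal_Iio_zero (pow_ne_zero 2 hσ.ne')]
  have hfreq : ∀ᵐ ω ∂ℙ, ∃ᶠ k in atTop, ∀ q : Fin d × Fin d, W k ω q.1 q.2 ∈ Set.Iio 0 :=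
    hindep.ae_frequently_forall_mem (fun p => hmeas p.1 p.2.1 p.2.2)
      (fun _ => measurableSet_Iio) (c := fun _ => 1 / 2) (fun _ => by simp)
      fun k q => hneg k q.1 q.2
  filter_upwards [hfreq] with ω hω
  have hzero : ∀ᶠ k in atTop, x k ω = 0 :=
    eventually_eq_zero_of_frequently_nonpos (A := fun k => W k ω)
      (fun k => funext (hrec k ω)) (hω.mono fun k hk i j => (hk (i, j)).le)
  exact tendsto_const_nhds.congr' (hzero.mono fun k hk => hk.symm)

/-- For a fully connected ReLU network `x^(k+1) = max(W^(k+1) x^(k), 0)`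
with nonzero input `x0`, fixed width `d`, and weight matrices with i.i.d. `N(0,σ²)`
entries for arbitrary `σ > 0`, the layer outputs converge to `0` almost surely. -/
theorem relu_network_as_to_zero {Ω : Type*} [MeasureSpace Ω]
    [IsProbabilityMeasure (ℙ : Measure Ω)]
    (d : ℕ) (hd : 0 < d) (σ : ℝ≥0) (hσ : 0 < σ)
    (W : ℕ → Ω → Matrix (Fin d) (Fin d) ℝ)
    (hmeas : ∀ k i j, Measurable fun ω => W k ω i j)
    (hindep : iIndepFun
      (fun p : ℕ × Fin d × Fin d => fun ω => W p.1 ω p.2.1 p.2.2) ℙ)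
    (hgauss : ∀ k i j, Measure.map (fun ω => W k ω i j) ℙ = gaussianReal 0 (σ ^ 2))
    (x0 : Fin d → ℝ) (hx0 : x0 ≠ 0)
    (x : ℕ → Ω → Fin d → ℝ) (hxzero : ∀ ω, x 0 ω = x0)
    (hrec : ∀ k ω i, x (k + 1) ω i = max (∑ j, W (k + 1) ω i j * x k ω j) 0) :
    ∀ᵐ ω ∂ℙ, Tendsto (fun k => x k ω) atTop (nhds 0) :=
  relu_network_as_to_zero_general d σ hσ W hmeas hindep hgauss x hrec
end

section
/- For any real α ∈ (0,1), integers m, ℓ ≥ 0 with m + ℓ = d + 2, and a ∈ (0,1], the integral J = ∫₀^∞ z^{−α} (1+2z)^{−m/2} (1+2a²z)^{−ℓ/2} dz equals 2^{α−1} sum_{k=0}^∞ C(ℓ/2 + k − 1, k) (1−a²)^k B(k+1−α, (m+ℓ)/2 + α − 1), where B is the Beta function and C(r,k) is the generalized binomial coefficient. -/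
open MeasureTheory

/-- The generalized binomial coefficient `C(r,k) = r(r−1)⋯(r−k+1)/k!`. -/
noncomputable def genBinom (r : ℝ) (k : ℕ) : ℝ :=
  (∏ j ∈ Finset.range k, (r - j)) / (Nat.factorial k)

/-- The (real) Beta function `B(x,y) = ∫₀¹ t^{x−1}(1−t)^{y−1} dt`. -/
noncomputable def betaFn (x y : ℝ) : ℝ :=
  ∫ t in Set.Ioo (0 : ℝ) 1, t ^ (x - 1) * (1 - t) ^ (y - 1)

open Set

/-! Writing `1 + c b z = (1 + c z) (1 - (1 - b) u)` with `u = c z / (1 + c z) ∈ [0, 1)`, the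
factor `(1 + c b z)^(-r)` expands in the binomial series in powers of `(1 - b) u`. Every term is
then a multiple of `z^(p-1) (1 + c z)^(-(p+q))`, whose integral over `(0, ∞)` is `c^(-p) B(p, q)`
by the substitution `z = t / (c (1 - t))`. Integrating termwise is legitimate because `B(·, q)` is
decreasing, so the integrals of the absolute values are dominated by
`B(1 - α, q) ∑ |C(r + k - 1, k) (1 - b)^k|`, which converges for `|1 - b| < 1`. -/

lemma genBinom_eq_ringChoose (r : ℝ) (k : ℕ) : genBinom r k = Ring.choose r k := by
  rw [genBinom, Ring.choose_eq_smul, ← Polynomial.aeval_eq_smeval, Polynomial.aeval_def,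
    ← Polynomial.eval_map, descPochhammer_map, descPochhammer_eval_eq_prod_range, smul_eq_mul,
    inv_mul_eq_div]

lemma hasSum_ringChoose_mul_pow {x : ℝ} (hx : |x| < 1) (a : ℝ) :
    HasSum (fun n : ℕ => Ring.choose (a + n - 1) n * x ^ n) ((1 - x) ^ (-a)) := by
  have h := (Real.one_div_one_sub_rpow_hasFPowerSeriesOnBall_zero a).hasSum (y := x)
    (by simpa [Metric.eball, edist_zero_right, enorm_eq_nnnorm, ← NNReal.coe_lt_one] using hx)
  simpa [FormalMultilinearSeries.ofScalars_apply_eq,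
    Real.rpow_neg (sub_nonneg.2 (abs_lt.1 hx).2.le), mul_comm] using h

lemma summable_norm_ringChoose_mul_pow {x : ℝ} (hx : |x| < 1) (a : ℝ) :
    Summable (fun n : ℕ => ‖Ring.choose (a + n - 1) n * x ^ n‖) := by
  have h := FormalMultilinearSeries.summable_norm_apply _ (x := x)
    (Metric.eball_subset_eball (Real.one_div_one_sub_rpow_hasFPowerSeriesOnBall_zero a).r_le ?_)
  · simpa [FormalMultilinearSeries.ofScalars_apply_eq, mul_comm] using h
  · simpa [Metric.eball, edist_zero_right, enorm_eq_nnnorm, ← NNReal.coe_lt_one] using hx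

lemma integrableOn_rpow_mul_one_sub_rpow {p q : ℝ} (hp : 0 < p) (hq : 0 < q) :
    IntegrableOn (fun t : ℝ => t ^ (p - 1) * (1 - t) ^ (q - 1)) (Ioo 0 1) := by
  have h := Complex.betaIntegral_convergent (u := (p : ℂ)) (v := (q : ℂ))
    (by simpa using hp) (by simpa using hq)
  rw [intervalIntegrable_iff_integrableOn_Ioo_of_le zero_le_one] at h
  refine IntegrableOn.congr_fun h.norm (fun t ⟨ht0, ht1⟩ => ?_) measurableSet_Ioo
  rw [norm_mul, show (1 : ℂ) - t = ((1 - t : ℝ) : ℂ) by push_cast; ring,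
    Complex.norm_cpow_eq_rpow_re_of_pos ht0, Complex.norm_cpow_eq_rpow_re_of_pos (by linarith)]
  simp

lemma betaFn_nonneg (p q : ℝ) : 0 ≤ betaFn p q :=
  setIntegral_nonneg measurableSet_Ioo fun t ⟨ht0, ht1⟩ => by
    have : 0 < 1 - t := by linarith
    positivity

lemma betaFn_le_betaFn_of_le {p p' q : ℝ} (hp' : 0 < p') (hpp' : p' ≤ p) (hq : 0 < q) :
    betaFn p q ≤ betaFn p' q := by
  refine setIntegral_mono_on (integrableOn_rpow_mul_one_sub_rpow (hp'.trans_le hpp') hq)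
    (integrableOn_rpow_mul_one_sub_rpow hp' hq) measurableSet_Ioo fun t ⟨ht0, ht1⟩ => ?_
  have : 0 < 1 - t := by linarith
  exact mul_le_mul_of_nonneg_right
    (Real.rpow_le_rpow_of_exponent_ge ht0 ht1.le (by linarith)) (by positivity)

lemma image_Ioo_div_mul_one_sub {c : ℝ} (hc : 0 < c) :
    (fun t : ℝ => t / (c * (1 - t))) '' Ioo 0 1 = Ioi 0 := by
  ext z
  refine ⟨fun ⟨t, ⟨ht0, ht1⟩, hz⟩ => hz ▸ div_pos ht0 (by nlinarith), fun hz => ?_⟩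
  have hz : 0 < z := hz
  refine ⟨c * z / (1 + c * z),
    ⟨by positivity, by rw [div_lt_one (by positivity)]; linarith⟩, ?_⟩
  field_simp
  ring

lemma injOn_div_mul_one_sub {c : ℝ} (hc : c ≠ 0) :
    InjOn (fun t : ℝ => t / (c * (1 - t))) (Ioo 0 1) := by
  intro s ⟨_, hs1⟩ t ⟨_, ht1⟩ h
  have : 1 - s ≠ 0 := by linarith
  have : 1 - t ≠ 0 := by linarith
  simp only at h
  field_simp at h
  linarith

lemma hasDerivAt_div_mul_one_sub {c t : ℝ} (hc : c ≠ 0) (ht : t ≠ 1) :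
    HasDerivAt (fun t : ℝ => t / (c * (1 - t))) (c⁻¹ * ((1 - t) ^ 2)⁻¹) t := by
  have h1t : 1 - t ≠ 0 := sub_ne_zero.2 (Ne.symm ht)
  refine ((hasDerivAt_id' t).div (((hasDerivAt_id' t).const_sub 1).const_mul c)
    (mul_ne_zero hc h1t)).congr_deriv ?_
  field_simp
  ring

lemma abs_deriv_mul_rpow_mul_one_add_mul_rpow {c t : ℝ} (hc : 0 < c) (ht : t ∈ Ioo 0 1)
    (p q : ℝ) :
    |c⁻¹ * ((1 - t) ^ 2)⁻¹| *
        ((t / (c * (1 - t))) ^ (p - 1) * (1 + c * (t / (c * (1 - t)))) ^ (-(p + q))) =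
      c ^ (-p) * (t ^ (p - 1) * (1 - t) ^ (q - 1)) := by
  obtain ⟨ht0, ht1⟩ := ht
  have hs : 0 < 1 - t := by linarith
  have h1 : 1 + c * (t / (c * (1 - t))) = (1 - t)⁻¹ := by
    field_simp
    ring
  rw [abs_of_pos (by positivity), h1, Real.inv_rpow hs.le, ← Real.rpow_neg hs.le, neg_neg,
    Real.div_rpow ht0.le (by positivity), Real.mul_rpow hc.le hs.le,
    ← Real.rpow_neg_one c, ← Real.rpow_natCast, ← Real.rpow_neg hs.le]
  have hc' : c ^ (-1 : ℝ) / c ^ (p - 1) = c ^ (-p) := by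
    rw [← Real.rpow_sub hc]; ring_nf
  have hs' : (1 - t) ^ (-((2 : ℕ) : ℝ)) / (1 - t) ^ (p - 1) * (1 - t) ^ (p + q) =
      (1 - t) ^ (q - 1) := by
    rw [← Real.rpow_sub hs, ← Real.rpow_add hs]; push_cast; ring_nf
  rw [← hc', ← hs']
  field_simp

lemma integral_Ioi_rpow_mul_one_add_mul_rpow {c : ℝ} (hc : 0 < c) (p q : ℝ) :
    ∫ z in Ioi 0, z ^ (p - 1) * (1 + c * z) ^ (-(p + q)) = c ^ (-p) * betaFn p q := by
  rw [← image_Ioo_div_mul_one_sub hc, integral_image_eq_integral_abs_deriv_smul measurableSet_Ioo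
    (fun t ht => (hasDerivAt_div_mul_one_sub hc.ne' ht.2.ne).hasDerivWithinAt)
    (injOn_div_mul_one_sub hc.ne'), betaFn, ← integral_const_mul]
  exact setIntegral_congr_fun measurableSet_Ioo fun t ht =>
    abs_deriv_mul_rpow_mul_one_add_mul_rpow hc ht p q

lemma integrableOn_Ioi_rpow_mul_one_add_mul_rpow {c p q : ℝ} (hc : 0 < c) (hp : 0 < p)
    (hq : 0 < q) :
    IntegrableOn (fun z : ℝ => z ^ (p - 1) * (1 + c * z) ^ (-(p + q))) (Ioi 0) := by
  rw [← image_Ioo_div_mul_one_sub hc, integrableOn_image_iff_integrableOn_abs_deriv_smul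
    measurableSet_Ioo (fun t ht => (hasDerivAt_div_mul_one_sub hc.ne' ht.2.ne).hasDerivWithinAt)
    (injOn_div_mul_one_sub hc.ne')]
  exact IntegrableOn.congr_fun ((integrableOn_rpow_mul_one_sub_rpow hp hq).const_mul _)
    (fun t ht => (abs_deriv_mul_rpow_mul_one_add_mul_rpow hc ht p q).symm) measurableSet_Ioo

lemma hasSum_one_add_mul_rpow_neg {b x : ℝ} (hb : |1 - b| ≤ 1) (hx : 0 ≤ x) (r : ℝ) :
    HasSum (fun k : ℕ => Ring.choose (r + k - 1) k * (1 - b) ^ k * (x ^ k * (1 + x) ^ (-(r + k))))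
      ((1 + b * x) ^ (-r)) := by
  have hx1 : 0 < 1 + x := by linarith
  set u := (1 - b) * x / (1 + x) with hu_def
  have hu : |u| < 1 := by
    rw [hu_def, abs_div, abs_mul, abs_of_nonneg hx, abs_of_pos hx1, div_lt_one hx1]
    nlinarith [abs_nonneg (1 - b)]
  have h1u : 1 + b * x = (1 + x) * (1 - u) := by
    rw [hu_def]
    field_simp
    ring
  rw [h1u, Real.mul_rpow hx1.le (by linarith [(abs_lt.1 hu).2])]
  refine ((hasSum_ringChoose_mul_pow hu r).mul_left ((1 + x) ^ (-r))).congr_fun fun k => ?_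
  rw [hu_def, div_pow, mul_pow, neg_add, Real.rpow_add hx1, Real.rpow_neg hx1.le (k : ℝ),
    Real.rpow_natCast]
  field_simp

lemma hasSum_rpow_neg_mul_rpow_mul_rpow {α b c r s z : ℝ} (hb : |1 - b| ≤ 1) (hc : 0 ≤ c)
    (hz : 0 < z) :
    HasSum (fun k : ℕ => Ring.choose (r + k - 1) k * (1 - b) ^ k * c ^ k *
        (z ^ ((k + 1 - α) - 1) * (1 + c * z) ^ (-((k + 1 - α) + (s + r + α - 1)))))
      (z ^ (-α) * (1 + c * z) ^ (-s) * (1 + c * b * z) ^ (-r)) := by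
  have hcz : 0 < 1 + c * z := by positivity
  rw [mul_right_comm c b, mul_comm (c * z) b]
  refine ((hasSum_one_add_mul_rpow_neg hb (mul_nonneg hc hz.le) r).mul_left
    (z ^ (-α) * (1 + c * z) ^ (-s))).congr_fun fun k => ?_
  have hz' : z ^ ((k + 1 - α) - 1) = z ^ (-α) * z ^ k := by
    rw [← Real.rpow_natCast, ← Real.rpow_add hz]; ring_nf
  have hcz' : (1 + c * z) ^ (-((k + 1 - α) + (s + r + α - 1))) =
      (1 + c * z) ^ (-s) * (1 + c * z) ^ (-(r + k)) := by
    rw [← Real.rpow_add hcz]; ring_nf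
  rw [hz', hcz', mul_pow]
  ring

theorem integral_Ioi_rpow_neg_mul_rpow_mul_rpow_eq_tsum {α b c r s : ℝ} (hα : α < 1)
    (hb : |1 - b| < 1) (hc : 0 < c) (hq : 0 < s + r + α - 1) :
    ∫ z in Ioi 0, z ^ (-α) * (1 + c * z) ^ (-s) * (1 + c * b * z) ^ (-r) =
      c ^ (α - 1) * ∑' k : ℕ,
        Ring.choose (r + k - 1) k * (1 - b) ^ k * betaFn (k + 1 - α) (s + r + α - 1) := by
  set q := s + r + α - 1
  set G : ℕ → ℝ → ℝ := fun k z =>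
    z ^ ((k + 1 - α) - 1) * (1 + c * z) ^ (-((k + 1 - α) + q))
  set coef : ℕ → ℝ := fun k => Ring.choose (r + k - 1) k * (1 - b) ^ k
  have hp (k : ℕ) : 0 < (k : ℝ) + 1 - α := by linarith [k.cast_nonneg (α := ℝ)]
  have hG_nonneg (k : ℕ) {z : ℝ} (hz : z ∈ Ioi 0) : 0 ≤ G k z := by
    have : (0 : ℝ) < z := hz
    positivity
  have hterm (e : ℝ) (k : ℕ) :
      ∫ z in Ioi 0, e * c ^ k * G k z = c ^ (α - 1) * (e * betaFn (k + 1 - α) q) := by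
    have hpow : c ^ k * c ^ (-((k : ℝ) + 1 - α)) = c ^ (α - 1) := by
      rw [← Real.rpow_natCast, ← Real.rpow_add hc]; ring_nf
    rw [integral_const_mul, integral_Ioi_rpow_mul_one_add_mul_rpow hc, ← hpow]
    ring
  have hnorm (k : ℕ) : ∫ z in Ioi 0, ‖coef k * c ^ k * G k z‖ =
      c ^ (α - 1) * (‖coef k‖ * betaFn (k + 1 - α) q) := by
    rw [← hterm]
    refine setIntegral_congr_fun measurableSet_Ioi fun z hz => ?_
    rw [norm_mul, norm_mul, Real.norm_of_nonneg (hG_nonneg k hz), norm_pow,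
      Real.norm_of_nonneg hc.le]
  have hsummable : Summable fun k => c ^ (α - 1) * (‖coef k‖ * betaFn (k + 1 - α) q) := by
    refine .mul_left _ <| ((summable_norm_ringChoose_mul_pow hb r).mul_right
      (betaFn (1 - α) q)).of_nonneg_of_le (fun k => by positivity [betaFn_nonneg (k + 1 - α) q])
      fun k => ?_
    exact mul_le_mul_of_nonneg_left
      (betaFn_le_betaFn_of_le (by linarith) (by linarith [k.cast_nonneg (α := ℝ)]) hq)
      (norm_nonneg _)
  calc ∫ z in Ioi 0, z ^ (-α) * (1 + c * z) ^ (-s) * (1 + c * b * z) ^ (-r)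
      = ∫ z in Ioi 0, ∑' k, coef k * c ^ k * G k z :=
        setIntegral_congr_fun measurableSet_Ioi fun z hz =>
          (hasSum_rpow_neg_mul_rpow_mul_rpow hb.le hc.le hz).tsum_eq.symm
    _ = ∑' k, ∫ z in Ioi 0, coef k * c ^ k * G k z :=
        (integral_tsum_of_summable_integral_norm
          (fun k => (integrableOn_Ioi_rpow_mul_one_add_mul_rpow hc (hp k) hq).const_mul _)
          (hsummable.congr fun k => (hnorm k).symm)).symm
    _ = _ := by simp only [hterm, tsum_mul_left, coef]

/-- For `α ∈ (0,1)`, `m + ℓ = d + 2` and `a ∈ (0,1]`,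
`∫₀^∞ z^{−α}(1+2z)^{−m/2}(1+2a²z)^{−ℓ/2} dz
  = 2^{α−1} ∑_{k≥0} C(ℓ/2+k−1, k) (1−a²)^k B(k+1−α, (m+ℓ)/2+α−1)`. -/
theorem J_integral_series (α : ℝ) (hα0 : 0 < α) (hα1 : α < 1)
    (d m ℓ : ℕ) (hml : m + ℓ = d + 2) (a : ℝ) (ha0 : 0 < a) (ha1 : a ≤ 1) :
    (∫ z in Set.Ioi (0 : ℝ),
        z ^ (-α) * (1 + 2 * z) ^ (-(m : ℝ) / 2) * (1 + 2 * a ^ 2 * z) ^ (-(ℓ : ℝ) / 2))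
      = 2 ^ (α - 1) * ∑' k : ℕ,
          genBinom ((ℓ : ℝ) / 2 + k - 1) k * (1 - a ^ 2) ^ k *
            betaFn ((k : ℝ) + 1 - α) (((m : ℝ) + ℓ) / 2 + α - 1) := by
  have hb : |1 - a ^ 2| < 1 := by
    rw [abs_lt]
    constructor <;> nlinarith
  have hq : 0 < (m : ℝ) / 2 + ℓ / 2 + α - 1 := by
    have : (m : ℝ) + ℓ = d + 2 := by exact_mod_cast hml
    linarith [d.cast_nonneg (α := ℝ)]
  simp only [neg_div, add_div, genBinom_eq_ringChoose]
  exact integral_Ioi_rpow_neg_mul_rpow_mul_rpow_eq_tsum hα1 hb two_pos hq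
end

section
/- Let B_d be a Binomial(d, 1/2) random variable and let F: {0,...,d} → R be given by F(n) = (n/d)^{s/2} for n ≥ 1 with F(0) = 0, for fixed s ∈ (0,2]. Then as d → ∞, E[F(B_d)] = 2^{−s/2}(1 + C(s/2,2)·(1/d) + o(1/d)), where C(s/2,2) = (s/2)(s/2−1)/2. -/
/-!
Write `t = n / d - 1 / 2`. On `[0, 1]` the function `x ↦ x ^ α` agrees with its second-order
Taylor polynomial at `1 / 2`, `2 ^ (-α) * (1 + 2 α t + 2 α (α - 1) t ^ 2)`, up to `O(|t| ^ 3)`: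
near `1 / 2` by the third-derivative bound, and away from it because both sides are bounded.
Under the binomial weights `t` has mean `0`, variance `1 / (4 d)` and fourth moment
`(3 d - 2) / (16 d ^ 3)`, all read off from the factorial moments
`∑ C(d, n) n^(k) = d^(k) 2 ^ (d - k)`. The Taylor polynomial thus averages to
`2 ^ (-α) (1 + α (α - 1) / (2 d))`, and by Cauchy–Schwarz the third absolute moment of `t` is at
most `d ^ (-3 / 2) = o(1 / d)`.
-/

open Filter Finset Set Topology

open Polynomial in
theorem Nat.sum_range_choose_mul_descFactorial (d k : ℕ) :
    ∑ n ∈ range (d + 1), d.choose n * n.descFactorial k = d.descFactorial k * 2 ^ (d - k) := by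
  have h := congrArg (fun p : ℕ[X] => (derivative^[k] p).eval 1) (add_pow (X : ℕ[X]) (C 1) d)
  simp only [iterate_derivative_X_add_pow] at h
  simp only [map_one, one_pow, mul_one, iterate_derivative_sum, ← Nat.cast_comm,
    iterate_derivative_natCast_mul, iterate_derivative_X_pow_eq_smul, eval_finsetSum] at h
  simpa [mul_comm, one_add_one_eq_two] using h.symm

theorem sum_choose_mul_descFactorial_div_two_pow (d k : ℕ) :
    ∑ n ∈ range (d + 1), (d.choose n : ℝ) * (1 / 2 ^ d) * n.descFactorial k
      = d.descFactorial k / 2 ^ k := by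
  have h := congrArg (Nat.cast : ℕ → ℝ) (Nat.sum_range_choose_mul_descFactorial d k)
  push_cast at h
  simp_rw [mul_right_comm _ (1 / 2 ^ d : ℝ), ← sum_mul, h]
  rcases le_or_gt k d with hkd | hdk
  · rw [pow_sub₀ _ two_ne_zero hkd]
    field_simp
  · simp [Nat.descFactorial_eq_zero_iff_lt.mpr hdk]

theorem Nat.cast_descFactorial_eq_prod_range {R : Type*} [CommRing R] (n k : ℕ) :
    (n.descFactorial k : R) = ∏ i ∈ range k, ((n : R) - i) := by
  rw [← descPochhammer_eval_eq_descFactorial, descPochhammer_eval_eq_prod_range]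

theorem sum_choose_div_two_pow (d : ℕ) :
    ∑ n ∈ range (d + 1), (d.choose n : ℝ) * (1 / 2 ^ d) = 1 := by
  simpa using sum_choose_mul_descFactorial_div_two_pow d 0

theorem sum_choose_mul_two_mul_sub (d : ℕ) :
    ∑ n ∈ range (d + 1), (d.choose n : ℝ) * (1 / 2 ^ d) * (2 * n - d) = 0 := by
  have hD := sum_choose_mul_descFactorial_div_two_pow d
  calc _ = 2 * ∑ n ∈ range (d + 1), (d.choose n : ℝ) * (1 / 2 ^ d) * n.descFactorial 1
        - d * ∑ n ∈ range (d + 1), (d.choose n : ℝ) * (1 / 2 ^ d) * n.descFactorial 0 := by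
          simp only [mul_sum, ← sum_sub_distrib]
          refine sum_congr rfl fun n _ => ?_
          simp only [Nat.cast_descFactorial_eq_prod_range, prod_range_succ, prod_range_zero]
          ring
    _ = 0 := by
          simp only [hD]
          simp only [Nat.cast_descFactorial_eq_prod_range, prod_range_succ, prod_range_zero]
          ring

theorem sum_choose_mul_two_mul_sub_sq (d : ℕ) :
    ∑ n ∈ range (d + 1), (d.choose n : ℝ) * (1 / 2 ^ d) * (2 * n - d) ^ 2 = (d : ℝ) := by
  have hD := sum_choose_mul_descFactorial_div_two_pow d
  calc _ = 4 * ∑ n ∈ range (d + 1), (d.choose n : ℝ) * (1 / 2 ^ d) * n.descFactorial 2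
        + (4 - 4 * d) * ∑ n ∈ range (d + 1), (d.choose n : ℝ) * (1 / 2 ^ d) * n.descFactorial 1
        + d ^ 2 * ∑ n ∈ range (d + 1), (d.choose n : ℝ) * (1 / 2 ^ d) * n.descFactorial 0 := by
          simp only [mul_sum, ← sum_add_distrib]
          refine sum_congr rfl fun n _ => ?_
          simp only [Nat.cast_descFactorial_eq_prod_range, prod_range_succ, prod_range_zero]
          ring
    _ = d := by
          simp only [hD]
          simp only [Nat.cast_descFactorial_eq_prod_range, prod_range_succ, prod_range_zero]
          ring

theorem sum_choose_mul_two_mul_sub_pow_four (d : ℕ) :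
    ∑ n ∈ range (d + 1), (d.choose n : ℝ) * (1 / 2 ^ d) * (2 * n - d) ^ 4
      = (d : ℝ) * (3 * d - 2) := by
  have hD := sum_choose_mul_descFactorial_div_two_pow d
  calc _ = 16 * ∑ n ∈ range (d + 1), (d.choose n : ℝ) * (1 / 2 ^ d) * n.descFactorial 4
        + (96 - 32 * d) * ∑ n ∈ range (d + 1), (d.choose n : ℝ) * (1 / 2 ^ d) * n.descFactorial 3
        + (112 - 96 * d + 24 * d ^ 2) *
            ∑ n ∈ range (d + 1), (d.choose n : ℝ) * (1 / 2 ^ d) * n.descFactorial 2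
        + (16 - 32 * d + 24 * d ^ 2 - 8 * d ^ 3) *
            ∑ n ∈ range (d + 1), (d.choose n : ℝ) * (1 / 2 ^ d) * n.descFactorial 1
        + d ^ 4 * ∑ n ∈ range (d + 1), (d.choose n : ℝ) * (1 / 2 ^ d) * n.descFactorial 0 := by
          simp only [mul_sum, ← sum_add_distrib]
          refine sum_congr rfl fun n _ => ?_
          simp only [Nat.cast_descFactorial_eq_prod_range, prod_range_succ, prod_range_zero]
          ring
    _ = d * (3 * d - 2) := by
          simp only [hD]
          simp only [Nat.cast_descFactorial_eq_prod_range, prod_range_succ, prod_range_zero]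
          ring

theorem sum_choose_mul_div_sub_half_pow {d : ℕ} (hd : d ≠ 0) (k : ℕ) :
    ∑ n ∈ range (d + 1), (d.choose n : ℝ) * (1 / 2 ^ d) * ((n : ℝ) / d - 1 / 2) ^ k
      = (∑ n ∈ range (d + 1), (d.choose n : ℝ) * (1 / 2 ^ d) * (2 * n - d) ^ k) / (2 * d) ^ k := by
  rw [sum_div]
  refine sum_congr rfl fun n _ => ?_
  rw [mul_div_assoc, ← div_pow]
  congr 2
  field_simp

theorem sum_choose_mul_abs_div_sub_half_pow_three_le {d : ℕ} (hd : d ≠ 0) :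
    ∑ n ∈ range (d + 1), (d.choose n : ℝ) * (1 / 2 ^ d) * |(n : ℝ) / d - 1 / 2| ^ 3
      ≤ 1 / (d * √d) := by
  have hd' : (0 : ℝ) < d := by positivity
  have hcs := sum_sq_le_sum_mul_sum_of_sq_le_mul (range (d + 1))
    (r := fun n => (d.choose n : ℝ) * (1 / 2 ^ d) * |(n : ℝ) / d - 1 / 2| ^ 3)
    (f := fun n => (d.choose n : ℝ) * (1 / 2 ^ d) * |(n : ℝ) / d - 1 / 2| ^ 2)
    (g := fun n => (d.choose n : ℝ) * (1 / 2 ^ d) * |(n : ℝ) / d - 1 / 2| ^ 4)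
    (fun n _ => by positivity) (fun n _ => by positivity) (fun n _ => le_of_eq (by ring))
  simp only [sq_abs, (by decide : Even 4).pow_abs, sum_choose_mul_div_sub_half_pow hd,
    sum_choose_mul_two_mul_sub_sq, sum_choose_mul_two_mul_sub_pow_four] at hcs
  refine le_of_pow_le_pow_left₀ two_ne_zero (by positivity) (hcs.trans ?_)
  have hsq : (1 / (d * √d) : ℝ) ^ 2 = 1 / d ^ 3 := by
    rw [div_pow, mul_pow, Real.sq_sqrt hd'.le]; ring
  rw [hsq]
  field_simp
  nlinarith

theorem abs_le_mul_abs_sub_pow_succ_of_hasDerivAt {f f' : ℝ → ℝ} {a b C : ℝ} {k : ℕ}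
    (hC : 0 ≤ C) (ha : f a = 0) (hf : ∀ u ∈ uIcc a b, HasDerivAt f (f' u) u)
    (hf' : ∀ u ∈ uIcc a b, |f' u| ≤ C * |u - a| ^ k) {u : ℝ} (hu : u ∈ uIcc a b) :
    |f u| ≤ C * |u - a| ^ (k + 1) := by
  have hsub : uIcc a u ⊆ uIcc a b := Set.uIcc_subset_uIcc_left hu
  have hbound : ∀ v ∈ uIcc a u, ‖f' v‖ ≤ C * |u - a| ^ k := fun v hv =>
    (hf' v (hsub hv)).trans <|
      mul_le_mul_of_nonneg_left (pow_le_pow_left₀ (abs_nonneg _) (abs_sub_left_of_mem_uIcc hv) k) hC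
  have := (convex_uIcc a u).norm_image_sub_le_of_norm_hasDerivWithin_le
    (fun v hv => (hf v (hsub hv)).hasDerivWithinAt) hbound left_mem_uIcc right_mem_uIcc
  simpa [ha, pow_succ, mul_assoc] using this

theorem abs_sub_taylor_two_le {f f₁ f₂ f₃ : ℝ → ℝ} {a b M : ℝ}
    (hf : ∀ u ∈ uIcc a b, HasDerivAt f (f₁ u) u) (hf₁ : ∀ u ∈ uIcc a b, HasDerivAt f₁ (f₂ u) u)
    (hf₂ : ∀ u ∈ uIcc a b, HasDerivAt f₂ (f₃ u) u) (hM : ∀ u ∈ uIcc a b, |f₃ u| ≤ M) :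
    |f b - (f a + f₁ a * (b - a) + f₂ a / 2 * (b - a) ^ 2)| ≤ M * |b - a| ^ 3 := by
  have hM0 : 0 ≤ M := (abs_nonneg _).trans (hM a left_mem_uIcc)
  have h₂ : ∀ u ∈ uIcc a b, |f₂ u - f₂ a| ≤ M * |u - a| ^ 1 :=
    fun u => abs_le_mul_abs_sub_pow_succ_of_hasDerivAt (f := fun v => f₂ v - f₂ a) (k := 0) hM0
      (sub_self _) (fun v hv => (hf₂ v hv).sub_const _) (by simpa using hM)
  have h₁ : ∀ u ∈ uIcc a b, |f₁ u - f₁ a - f₂ a * (u - a)| ≤ M * |u - a| ^ 2 := by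
    refine fun u => abs_le_mul_abs_sub_pow_succ_of_hasDerivAt
      (f := fun v => f₁ v - f₁ a - f₂ a * (v - a)) hM0 (by simp) (fun v hv => ?_) h₂
    exact (((hf₁ v hv).sub_const (f₁ a)).sub
      (((hasDerivAt_id v).sub_const a).const_mul (f₂ a))).congr_deriv (by rw [mul_one])
  have h₀ : |f b - f a - f₁ a * (b - a) - f₂ a / 2 * (b - a) ^ 2| ≤ M * |b - a| ^ 3 := by
    refine abs_le_mul_abs_sub_pow_succ_of_hasDerivAt
      (f := fun v => f v - f a - f₁ a * (v - a) - f₂ a / 2 * (v - a) ^ 2) hM0 (by simp)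
      (fun v hv => ?_) h₁ right_mem_uIcc
    exact ((((hf v hv).sub_const (f a)).sub
      (((hasDerivAt_id v).sub_const a).const_mul (f₁ a))).sub
      ((((hasDerivAt_id v).sub_const a).pow 2).const_mul (f₂ a / 2))).congr_deriv
      (by simp; ring)
  convert h₀ using 2
  ring

theorem half_rpow_sub_natCast (α : ℝ) (k : ℕ) : (1 / 2 : ℝ) ^ (α - k) = 2 ^ k * 2 ^ (-α) := by
  rw [one_div, Real.inv_rpow zero_le_two, ← Real.rpow_neg zero_le_two, neg_sub,
    Real.rpow_sub two_pos, Real.rpow_natCast, Real.rpow_neg zero_le_two, div_eq_mul_inv]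

theorem abs_rpow_sub_taylor_le_of_abs_sub_half_le {α x : ℝ} (hα0 : 0 ≤ α) (hα1 : α ≤ 1)
    (hx : |x - 1 / 2| ≤ 1 / 4) :
    |x ^ α - 2 ^ (-α) * (1 + 2 * α * (x - 1 / 2) + 2 * α * (α - 1) * (x - 1 / 2) ^ 2)|
      ≤ 128 * |x - 1 / 2| ^ 3 := by
  have hu : ∀ u ∈ uIcc (1 / 2) x, 1 / 4 ≤ u ∧ u ≤ 1 := fun u hu => by
    have := (abs_sub_left_of_mem_uIcc hu).trans hx
    constructor <;> linarith [abs_le.mp this]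
  have hderiv (β : ℝ) : ∀ u ∈ uIcc (1 / 2) x, HasDerivAt (fun v => v ^ β) (β * u ^ (β - 1)) u :=
    fun u h => Real.hasDerivAt_rpow_const (Or.inl (by linarith [hu u h]))
  have hf₃ : ∀ u ∈ uIcc (1 / 2) x, |α * (α - 1) * (α - 2) * u ^ (α - 3)| ≤ 128 := by
    intro u h
    obtain ⟨hu0, hu1⟩ := hu u h
    have hpow : u ^ (α - 3) ≤ 64 := calc
      u ^ (α - 3) ≤ u ^ (-3 : ℝ) := Real.rpow_le_rpow_of_exponent_ge (by linarith) hu1 (by linarith)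
      _ = (u ^ 3)⁻¹ := by rw [Real.rpow_neg (by linarith)]; norm_cast
      _ ≤ 64 := by
        rw [inv_le_comm₀ (by positivity) (by norm_num)]
        nlinarith [pow_le_pow_left₀ (by norm_num) hu0 3]
    have hcoeff : |α * (α - 1) * (α - 2)| ≤ 2 := by
      rw [abs_le]; constructor <;> nlinarith [mul_nonneg hα0 (sub_nonneg.mpr hα1)]
    rw [abs_mul, abs_of_nonneg (Real.rpow_nonneg (by linarith) _)]
    nlinarith [abs_nonneg (α * (α - 1) * (α - 2)), Real.rpow_nonneg (by linarith : 0 ≤ u) (α - 3)]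
  have h := abs_sub_taylor_two_le (f := fun v => v ^ α) (f₁ := fun v => α * v ^ (α - 1))
    (f₂ := fun v => α * (α - 1) * v ^ (α - 2)) (hderiv α)
    (fun u h => by
      simpa [mul_assoc, sub_sub, one_add_one_eq_two] using (hderiv (α - 1) u h).const_mul α)
    (fun u h => by
      simpa [mul_assoc, sub_sub, two_add_one_eq_three]
        using (hderiv (α - 2) u h).const_mul (α * (α - 1)))
    hf₃
  convert h using 3
  have h₀ : (1 / 2 : ℝ) ^ α = 2 ^ (-α) := by simpa using half_rpow_sub_natCast α 0
  have h₁ : (1 / 2 : ℝ) ^ (α - 1) = 2 * 2 ^ (-α) := by simpa using half_rpow_sub_natCast α 1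
  have h₂ : (1 / 2 : ℝ) ^ (α - 2) = 2 ^ 2 * 2 ^ (-α) := by simpa using half_rpow_sub_natCast α 2
  rw [h₀, h₁, h₂]
  ring

theorem abs_rpow_sub_taylor_le {α x : ℝ} (hα0 : 0 ≤ α) (hα1 : α ≤ 1) (hx0 : 0 ≤ x)
    (hx1 : x ≤ 1) :
    |x ^ α - 2 ^ (-α) * (1 + 2 * α * (x - 1 / 2) + 2 * α * (α - 1) * (x - 1 / 2) ^ 2)|
      ≤ 256 * |x - 1 / 2| ^ 3 := by
  rcases le_or_gt |x - 1 / 2| (1 / 4) with hnear | hfar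
  · have := abs_rpow_sub_taylor_le_of_abs_sub_half_le hα0 hα1 hnear
    nlinarith [pow_nonneg (abs_nonneg (x - 1 / 2)) 3]
  · have ht : |x - 1 / 2| ≤ 1 / 2 := abs_le.mpr ⟨by linarith, by linarith⟩
    set t := x - 1 / 2
    have hfar3 : 4 ≤ 256 * |t| ^ 3 := by nlinarith [pow_le_pow_left₀ (by norm_num) hfar.le 3]
    have hQ : |1 + 2 * α * t + 2 * α * (α - 1) * t ^ 2| ≤ 2 := by
      rw [abs_le]
      have hαt : |α * t| ≤ 1 / 2 := by
        rw [abs_mul, abs_of_nonneg hα0]; nlinarith [abs_nonneg t]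
      have ht2 : t ^ 2 ≤ 1 / 4 := by nlinarith [sq_abs t, abs_nonneg t]
      constructor <;> nlinarith [abs_le.mp hαt, sq_nonneg t, mul_nonneg hα0 (sub_nonneg.mpr hα1)]
    have hc : |(2 : ℝ) ^ (-α)| ≤ 1 := by
      rw [abs_of_pos (by positivity)]
      exact Real.rpow_le_one_of_one_le_of_nonpos one_le_two (by linarith)
    have hxα : |x ^ α| ≤ 1 := by
      rw [abs_of_nonneg (Real.rpow_nonneg hx0 _)]
      exact Real.rpow_le_one hx0 hx1 hα0
    calc _ ≤ |x ^ α| + |(2 : ℝ) ^ (-α)| * |1 + 2 * α * t + 2 * α * (α - 1) * t ^ 2| := by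
          rw [← abs_mul]; exact abs_sub _ _
      _ ≤ 1 + 1 * 2 := by gcongr
      _ ≤ 256 * |t| ^ 3 := by linarith

theorem abs_sum_choose_mul_rpow_sub_le {α : ℝ} (hα0 : 0 ≤ α) (hα1 : α ≤ 1) {d : ℕ}
    (hd : d ≠ 0) :
    |∑ n ∈ range (d + 1), (d.choose n : ℝ) * (1 / 2 ^ d) * ((n : ℝ) / d) ^ α
        - 2 ^ (-α) * (1 + α * (α - 1) / 2 / d)| ≤ 256 / (d * √d) := by
  have hd' : (0 : ℝ) < d := by positivity
  have hmean : ∑ n ∈ range (d + 1), (d.choose n : ℝ) * (1 / 2 ^ d) *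
      (2 ^ (-α) * (1 + 2 * α * ((n : ℝ) / d - 1 / 2)
        + 2 * α * (α - 1) * ((n : ℝ) / d - 1 / 2) ^ 2))
      = 2 ^ (-α) * (1 + α * (α - 1) / 2 / d) := by
    have h₁ := sum_choose_mul_div_sub_half_pow hd 1
    have h₂ := sum_choose_mul_div_sub_half_pow hd 2
    simp only [pow_one, sum_choose_mul_two_mul_sub, sum_choose_mul_two_mul_sub_sq] at h₁ h₂
    calc _ = 2 ^ (-α) * (∑ n ∈ range (d + 1), (d.choose n : ℝ) * (1 / 2 ^ d)
          + 2 * α * ∑ n ∈ range (d + 1), (d.choose n : ℝ) * (1 / 2 ^ d) * ((n : ℝ) / d - 1 / 2)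
          + 2 * α * (α - 1) *
              ∑ n ∈ range (d + 1), (d.choose n : ℝ) * (1 / 2 ^ d) * ((n : ℝ) / d - 1 / 2) ^ 2) := by
          simp only [mul_sum, ← sum_add_distrib]
          exact sum_congr rfl fun n _ => by ring
      _ = _ := by
          rw [sum_choose_div_two_pow, h₁, h₂]
          field_simp
          ring
  calc _ = |∑ n ∈ range (d + 1), (d.choose n : ℝ) * (1 / 2 ^ d) * (((n : ℝ) / d) ^ α
        - 2 ^ (-α) * (1 + 2 * α * ((n : ℝ) / d - 1 / 2)
          + 2 * α * (α - 1) * ((n : ℝ) / d - 1 / 2) ^ 2))| := by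
        rw [← hmean, ← sum_sub_distrib]; simp only [mul_sub]
    _ ≤ ∑ n ∈ range (d + 1),
          (d.choose n : ℝ) * (1 / 2 ^ d) * (256 * |(n : ℝ) / d - 1 / 2| ^ 3) := by
        refine (abs_sum_le_sum_abs _ _).trans (sum_le_sum fun n hn => ?_)
        rw [abs_mul, abs_of_nonneg (by positivity)]
        have hn : (n : ℝ) ≤ d := by exact_mod_cast Nat.lt_succ_iff.mp (mem_range.mp hn)
        gcongr
        exact abs_rpow_sub_taylor_le hα0 hα1 (by positivity) (div_le_one_of_le₀ hn hd'.le)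
    _ ≤ 256 * (1 / (d * √d)) := by
        simp only [mul_left_comm _ (256 : ℝ), ← mul_sum]
        gcongr
        exact sum_choose_mul_abs_div_sub_half_pow_three_le hd
    _ = 256 / (d * √d) := by ring

theorem tendsto_mul_sum_choose_mul_rpow_sub {α : ℝ} (hα0 : 0 ≤ α) (hα1 : α ≤ 1) :
    Tendsto (fun d : ℕ => (d : ℝ) * (∑ n ∈ range (d + 1), (d.choose n : ℝ) * (1 / 2 ^ d) *
      ((n : ℝ) / d) ^ α - 2 ^ (-α) * (1 + α * (α - 1) / 2 / d))) atTop (𝓝 0) := by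
  refine squeeze_zero_norm' (a := fun d : ℕ => 256 / √d) ?_ ?_
  · filter_upwards [eventually_ne_atTop 0] with d hd
    have hd' : (0 : ℝ) < d := by positivity
    rw [norm_mul, Real.norm_eq_abs, Real.norm_eq_abs, abs_of_pos hd']
    calc _ ≤ (d : ℝ) * (256 / (d * √d)) := by
          gcongr; exact abs_sum_choose_mul_rpow_sub_le hα0 hα1 hd
      _ = 256 / √d := by field_simp
  · simpa using tendsto_const_nhds.div_atTop
      (Real.tendsto_sqrt_atTop.comp tendsto_natCast_atTop_atTop)

/-- Let `B_d ~ Binomial(d, 1/2)` and `F(n) = (n/d)^{s/2}` (with `F(0) = 0`)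
for fixed `s ∈ (0,2]`. Then as `d → ∞`,
`E[F(B_d)] = 2^{−s/2} (1 + C(s/2,2)/d + o(1/d))` where `C(s/2,2) = (s/2)(s/2−1)/2`.
Here `E[F(B_d)] = ∑_{n=0}^d C(d,n) 2^{−d} (n/d)^{s/2}` (for `s > 0` the `n = 0` term
vanishes automatically). -/
theorem binomial_rpow_moment_asymptotics (s : ℝ) (hs0 : 0 < s) (hs2 : s ≤ 2) :
    ∃ e : ℕ → ℝ, Tendsto (fun d : ℕ => (d : ℝ) * e d) atTop (nhds 0) ∧
      ∀ d : ℕ, 1 ≤ d →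
        (∑ n ∈ Finset.range (d + 1),
            (d.choose n : ℝ) * (1 / 2 ^ d) * ((n : ℝ) / d) ^ (s / 2))
          = 2 ^ (-(s / 2)) *
              (1 + ((s / 2) * (s / 2 - 1) / 2) / d + e d) := by
  have hc : (2 : ℝ) ^ (-(s / 2)) ≠ 0 := by positivity
  refine ⟨fun d => (∑ n ∈ range (d + 1), (d.choose n : ℝ) * (1 / 2 ^ d) * ((n : ℝ) / d) ^ (s / 2)
    - 2 ^ (-(s / 2)) * (1 + s / 2 * (s / 2 - 1) / 2 / d)) / 2 ^ (-(s / 2)), ?_,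
    fun d _ => by field_simp; ring⟩
  have h := tendsto_mul_sum_choose_mul_rpow_sub (α := s / 2) (by linarith) (by linarith)
  simpa [mul_div_assoc] using h.div_const (2 ^ (-(s / 2)))
end
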